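/- arXiv:2108.09483 — 9 statements merged into one kernel-verified Lean document; each statement's English description precedes it below -/
import Mathlib

section
/- Let n ≥ 5, let 0 < λ ≤ 1/4 and r > 0. Let p_u = (0, 1/2) and p_v = (0, −1/2) in ℝ², and let p_0, p_1, …, p_{n−3} ∈ ℝ² satisfy: p_0 = (r, 0); p_i = (1/2 − λ)·p_u + (1/2 − λ)·p_v + λ·p_{i−1} + λ·p_{i+1} for every i with 1 ≤ i ≤ n − 4; and p_{n−3} = (1/2 − λ/2)·p_u + (1/2 − λ/2)·p_v + λ·p_{n−4}. Suppose moreover that the first coordinates are strictly decreasing: the x-coordinate of p_{i+1} is less than the x-coordinate of p_i for 0 ≤ i ≤ n − 4. Then the second coordinate of p_i equals 0 for every i with 1 ≤ i ≤ n − 3, and the x-coordinate of p_{n−4} is at most r·(λ/(1−λ))^{n−4}. -/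
/-!
Since `p_u + p_v = 0`, the equations say `p_i = λ (p_{i-1} + p_{i+1})` and `p_{n-3} = λ p_{n-4}`.
For the `y`-coordinates this is a maximum principle: every `|y_i|` is at most `2λ ≤ 1/2` times
`max_j |y_j|`, and `y_0 = 0`, so the maximum vanishes. For the `x`-coordinates, `x_{i+1} < x_i`
turns `x_i = λ x_{i-1} + λ x_{i+1}` into `(1 - λ) x_i < λ x_{i-1}`, and the bound follows by
iterating this contraction from `x_0 = r`.
-/

theorem eq_zero_of_abs_le_mul_of_bound {ι : Type*} (s : Finset ι) (f : ι → ℝ) {ρ : ℝ}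
    (hρ : ρ < 1) (h : ∀ M, (∀ j ∈ s, |f j| ≤ M) → ∀ i ∈ s, |f i| ≤ ρ * M) :
    ∀ i ∈ s, f i = 0 := by
  intro i hi
  obtain ⟨k, hk, hmax⟩ := s.exists_max_image (fun j => |f j|) ⟨i, hi⟩
  have hk_zero : |f k| = 0 := by
    have := h (|f k|) hmax k hk
    nlinarith [abs_nonneg (f k)]
  exact abs_eq_zero.mp (le_antisymm (hk_zero ▸ hmax i hi) (abs_nonneg _))

theorem eq_zero_of_eq_mul_add_mul {y : ℕ → ℝ} {c : ℝ} {m : ℕ} (hc0 : 0 ≤ c) (hc : c < 1 / 2)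
    (h0 : y 0 = 0) (hmid : ∀ i, 1 ≤ i → i ≤ m → y i = c * y (i - 1) + c * y (i + 1))
    (hend : y (m + 1) = c * y m) :
    ∀ i ≤ m + 1, y i = 0 := by
  have hcontr : ∀ M, (∀ j ∈ Finset.range (m + 2), |y j| ≤ M) →
      ∀ i ∈ Finset.range (m + 2), |y i| ≤ 2 * c * M := by
    intro M hM i hi
    have hbound : ∀ j ≤ m + 1, |y j| ≤ M := fun j hj => hM j (Finset.mem_range.mpr (by omega))
    have hM0 : 0 ≤ M := (abs_nonneg _).trans (hbound 0 (by omega))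
    rw [Finset.mem_range] at hi
    rcases Nat.eq_zero_or_pos i with rfl | hi0
    · rw [h0, abs_zero]; positivity
    rcases Nat.lt_or_ge i (m + 1) with him | hi_ge
    · calc |y i| = |c * y (i - 1) + c * y (i + 1)| := by rw [← hmid i hi0 (by omega)]
        _ ≤ c * |y (i - 1)| + c * |y (i + 1)| := by
          simpa only [abs_mul, abs_of_nonneg hc0] using abs_add_le (c * y (i - 1)) (c * y (i + 1))
        _ ≤ c * M + c * M := by
          gcongr
          · exact hbound _ (by omega)
          · exact hbound _ (by omega)
        _ = 2 * c * M := by ring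
    · obtain rfl : i = m + 1 := by omega
      calc |y (m + 1)| = c * |y m| := by rw [hend, abs_mul, abs_of_nonneg hc0]
        _ ≤ c * M := by gcongr; exact hbound m (by omega)
        _ ≤ 2 * c * M := by nlinarith
  intro i hi
  exact eq_zero_of_abs_le_mul_of_bound _ y (by linarith) hcontr i (Finset.mem_range.mpr (by omega))

theorem le_div_one_sub_mul_of_eq_mul_add_mul {x a b c : ℝ} (hc0 : 0 ≤ c) (hc1 : c < 1)
    (hx : x = c * a + c * b) (hb : b < x) : x ≤ c / (1 - c) * a := by
  rw [div_mul_eq_mul_div, le_div_iff₀ (by linarith)]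
  nlinarith [mul_le_mul_of_nonneg_left hb.le hc0]

theorem le_mul_pow_of_eq_mul_add_mul {x : ℕ → ℝ} {c : ℝ} {m : ℕ} (hc0 : 0 ≤ c) (hc1 : c < 1)
    (hmid : ∀ i, 1 ≤ i → i ≤ m → x i = c * x (i - 1) + c * x (i + 1))
    (hdec : ∀ i, 1 ≤ i → i ≤ m → x (i + 1) < x i) :
    ∀ k ≤ m, x k ≤ x 0 * (c / (1 - c)) ^ k := by
  have hρ : 0 ≤ c / (1 - c) := div_nonneg hc0 (by linarith)
  intro k
  induction k with
  | zero => simp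
  | succ k ih =>
    intro hk
    calc x (k + 1) ≤ c / (1 - c) * x k :=
          le_div_one_sub_mul_of_eq_mul_add_mul hc0 hc1 (hmid (k + 1) (by omega) hk)
            (hdec (k + 1) (by omega) hk)
      _ ≤ c / (1 - c) * (x 0 * (c / (1 - c)) ^ k) := by gcongr; exact ih (by omega)
      _ = x 0 * (c / (1 - c)) ^ (k + 1) := by ring

theorem eades_garvan_drawing_general (n : ℕ) (hn : 5 ≤ n)
    (lam r : ℝ) (hlam : 0 < lam) (hlam4 : lam ≤ 1 / 4)
    (pu pv : ℝ × ℝ) (hpu : pu = (0, 1 / 2)) (hpv : pv = (0, -(1 / 2)))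
    (p : ℕ → ℝ × ℝ) (hp0 : p 0 = (r, 0))
    (hrec : ∀ i, 1 ≤ i → i ≤ n - 4 →
      p i = (1 / 2 - lam) • pu + (1 / 2 - lam) • pv + lam • p (i - 1) + lam • p (i + 1))
    (hlast : p (n - 3) = (1 / 2 - lam / 2) • pu + (1 / 2 - lam / 2) • pv + lam • p (n - 4))
    (hdec : ∀ i, i ≤ n - 4 → (p (i + 1)).1 < (p i).1) :
    (∀ i, 1 ≤ i → i ≤ n - 3 → (p i).2 = 0) ∧
    (p (n - 4)).1 ≤ r * (lam / (1 - lam)) ^ (n - 4) := by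
  set m := n - 4
  have hn3 : n - 3 = m + 1 := by omega
  have hpv_neg : pv = -pu := by rw [hpu, hpv]; ext <;> simp
  have hmid : ∀ i, 1 ≤ i → i ≤ m → p i = lam • p (i - 1) + lam • p (i + 1) := by
    intro i h1 h2
    rw [hrec i h1 h2, hpv_neg, smul_neg, add_neg_cancel, zero_add]
  have hend : p (m + 1) = lam • p m := by
    rw [← hn3, hlast, hpv_neg, smul_neg, add_neg_cancel, zero_add]
  refine ⟨fun i h1 h2 => ?_, ?_⟩
  · have hy := eq_zero_of_eq_mul_add_mul (y := fun i => (p i).2) hlam.le (by linarith)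
      (by simp [hp0]) (fun i h1 h2 => by simpa using congrArg Prod.snd (hmid i h1 h2))
      (by simpa using congrArg Prod.snd hend)
    exact hy i (by omega)
  · have hx := le_mul_pow_of_eq_mul_add_mul (x := fun i => (p i).1) hlam.le (by linarith)
      (fun i h1 h2 => by simpa using congrArg Prod.fst (hmid i h1 h2))
      (fun i _ h2 => hdec i h2) m le_rfl
    simpa [hp0] using hx

/-- Analysis of the Floater drawing of the Eades–Garvan graph: the internal vertices
lie on the `x`-axis and their `x`-coordinates decrease geometrically. -/
theorem eades_garvan_drawing (n : ℕ) (hn : 5 ≤ n)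
    (lam r : ℝ) (hlam : 0 < lam) (hlam4 : lam ≤ 1 / 4) (hr : 0 < r)
    (pu pv : ℝ × ℝ) (hpu : pu = (0, 1 / 2)) (hpv : pv = (0, -(1 / 2)))
    (p : ℕ → ℝ × ℝ) (hp0 : p 0 = (r, 0))
    (hrec : ∀ i, 1 ≤ i → i ≤ n - 4 →
      p i = (1 / 2 - lam) • pu + (1 / 2 - lam) • pv + lam • p (i - 1) + lam • p (i + 1))
    (hlast : p (n - 3) = (1 / 2 - lam / 2) • pu + (1 / 2 - lam / 2) • pv + lam • p (n - 4))
    (hdec : ∀ i, i ≤ n - 4 → (p (i + 1)).1 < (p i).1) :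
    (∀ i, 1 ≤ i → i ≤ n - 3 → (p i).2 = 0) ∧
    (p (n - 4)).1 ≤ r * (lam / (1 - lam)) ^ (n - 4) :=
  eades_garvan_drawing_general n hn lam r hlam hlam4 pu pv hpu hpv p hp0 hrec hlast hdec
end

section
/- For any three noncollinear points A, B, C in ℝ², the resolution of the triangle ABC is at most √3/2. -/
/-
If `AB` is a longest side of the triangle, the vertex `C` lies within `√3/2 · |AB|` of the
midpoint of `AB`: by Apollonius' theorem its squared distance to the midpoint is
`(|CA|² + |CB|²)/2 - |AB|²/4 ≤ 3/4 · |AB|²`. The midpoint lies on the side `AB`, so `C` is at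
distance at most `√3/2 · |AB|` from the opposite side.
-/

noncomputable section

/-- The Euclidean plane. -/
abbrev Pt : Type := EuclideanSpace ℝ (Fin 2)

/-- The resolution of the triangle `A B C`: the minimum over the three vertices of the
distance from that vertex to the closed opposite side, divided by the length of the
longest side. -/
noncomputable def triResolution (A B C : Pt) : ℝ :=
  min (Metric.infDist A (segment ℝ B C))
      (min (Metric.infDist B (segment ℝ A C)) (Metric.infDist C (segment ℝ A B))) /
  max (dist A B) (max (dist B C) (dist A C))

open Metric

theorem dist_midpoint_le_of_dist_le {V P : Type*} [NormedAddCommGroup V] [InnerProductSpace ℝ V]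
    [MetricSpace P] [NormedAddTorsor V P] {A B C : P}
    (hA : dist C A ≤ dist A B) (hB : dist C B ≤ dist A B) :
    dist C (midpoint ℝ A B) ≤ √3 / 2 * dist A B := by
  have apollonius :=
    EuclideanGeometry.dist_sq_add_dist_sq_eq_two_mul_dist_midpoint_sq_add_half_dist_sq C A B
  have hsq : dist C (midpoint ℝ A B) ^ 2 ≤ (√3 / 2 * dist A B) ^ 2 := by
    rw [mul_pow, div_pow, Real.sq_sqrt (by norm_num : (0 : ℝ) ≤ 3)]
    nlinarith [pow_le_pow_left₀ dist_nonneg hA 2, pow_le_pow_left₀ dist_nonneg hB 2]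
  exact le_of_pow_le_pow_left₀ two_ne_zero (by positivity) hsq

section InnerProductSpace

variable {V : Type*} [NormedAddCommGroup V] [InnerProductSpace ℝ V]

theorem infDist_segment_le_of_dist_le {A B C : V}
    (hA : dist C A ≤ dist A B) (hB : dist C B ≤ dist A B) :
    infDist C (segment ℝ A B) ≤ √3 / 2 * dist A B :=
  (infDist_le_dist_of_mem (midpoint_mem_segment A B)).trans (dist_midpoint_le_of_dist_le hA hB)

theorem min_infDist_segment_le (A B C : V) :
    min (infDist A (segment ℝ B C)) (min (infDist B (segment ℝ A C)) (infDist C (segment ℝ A B)))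
      ≤ √3 / 2 * max (dist A B) (max (dist B C) (dist A C)) := by
  have hAB : dist A B ≤ max (dist A B) (max (dist B C) (dist A C)) := le_max_left _ _
  have hBC : dist B C ≤ max (dist A B) (max (dist B C) (dist A C)) :=
    (le_max_left _ _).trans (le_max_right _ _)
  have hAC : dist A C ≤ max (dist A B) (max (dist B C) (dist A C)) :=
    (le_max_right _ _).trans (le_max_right _ _)
  rcases max_choice (dist A B) (max (dist B C) (dist A C)) with hM | hM <;>
    rw [hM] at hAB hBC hAC ⊢
  · exact (min_le_right _ _).trans <| (min_le_right _ _).trans <|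
      infDist_segment_le_of_dist_le (by rwa [dist_comm]) (by rwa [dist_comm])
  · rcases max_choice (dist B C) (dist A C) with hM' | hM' <;> rw [hM'] at hAB hBC hAC ⊢
    · exact (min_le_left _ _).trans <| infDist_segment_le_of_dist_le hAB hAC
    · exact (min_le_right _ _).trans <| (min_le_left _ _).trans <|
        infDist_segment_le_of_dist_le (by rwa [dist_comm]) hBC

end InnerProductSpace

theorem triResolution_le_general (A B C : Pt) :
    triResolution A B C ≤ Real.sqrt 3 / 2 :=
  div_le_of_le_mul₀ (by positivity) (by positivity) (min_infDist_segment_le A B C)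

/-- The resolution of any triangle is at most `√3 / 2`. -/
theorem triResolution_le (A B C : Pt) (h : ¬ Collinear ℝ ({A, B, C} : Set Pt)) :
    triResolution A B C ≤ Real.sqrt 3 / 2 :=
  triResolution_le_general A B C
end
end

section
/- Let A, B, C ∈ ℝ² be noncollinear and let r be the resolution of the triangle ABC. Then for each side of the triangle, the distance from the opposite vertex to the line through that side, divided by the length of the side, is at least r. In particular, dist(C, line through A and B) / dist(A, B) ≥ r, and similarly for the other two sides. -/
/-!
Let `S = √(‖B - A‖²‖C - A‖² - ⟪B - A, C - A⟫²)` be twice the area of the triangle. The height onto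
a side of length `d` is `S / d`, so height over side is `S / d² ≥ S / M²`, where `M` is the longest
side. Both angles at the ends of the longest side are non-obtuse, so the foot of the perpendicular
from the opposite vertex lies on that side; hence the minimal vertex-to-side distance is at most
`S / M`, and the resolution is at most `S / M²`.
-/

noncomputable section

open Metric RealInnerProductSpace

section Gram

variable {V : Type*} [NormedAddCommGroup V] [InnerProductSpace ℝ V]

/-- The squared area of the parallelogram spanned by `u` and `v`. -/
def gramDet (u v : V) : ℝ := ‖u‖ ^ 2 * ‖v‖ ^ 2 - ⟪u, v⟫ ^ 2

lemma gramDet_comm (u v : V) : gramDet u v = gramDet v u := by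
  simp only [gramDet, real_inner_comm]; ring

lemma gramDet_neg_right (u v : V) : gramDet u (-v) = gramDet u v := by
  simp [gramDet]

lemma gramDet_sub_left_self (u v : V) : gramDet (u - v) v = gramDet u v := by
  simp only [gramDet, norm_sub_sq_real, inner_sub_left, real_inner_self_eq_norm_sq]; ring

lemma gramDet_sub_rotate (A B C : V) :
    gramDet (C - B) (A - B) = gramDet (B - A) (C - A) := by
  rw [show C - B = (C - A) - (B - A) by abel, show A - B = -(B - A) by abel,
    gramDet_neg_right, gramDet_sub_left_self, gramDet_comm]

lemma sq_norm_mul_sq_norm_sub_smul (u v : V) (t : ℝ) :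
    ‖v‖ ^ 2 * ‖u - t • v‖ ^ 2 = (t * ‖v‖ ^ 2 - ⟪u, v⟫) ^ 2 + gramDet v u := by
  simp only [gramDet, norm_sub_sq_real, norm_smul, inner_smul_right, real_inner_comm u v,
    mul_pow, Real.norm_eq_abs, sq_abs]
  ring

lemma sqrt_gramDet_le_norm_mul_norm_sub_smul (u v : V) (t : ℝ) :
    √(gramDet v u) ≤ ‖v‖ * ‖u - t • v‖ := by
  rw [Real.sqrt_le_left (by positivity), mul_pow, sq_norm_mul_sq_norm_sub_smul]
  nlinarith [sq_nonneg (t * ‖v‖ ^ 2 - ⟪u, v⟫)]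

lemma norm_mul_norm_sub_inner_div_smul (u v : V) :
    ‖v‖ * ‖u - (⟪u, v⟫ / ‖v‖ ^ 2) • v‖ = √(gramDet v u) := by
  have hfoot : ⟪u, v⟫ / ‖v‖ ^ 2 * ‖v‖ ^ 2 = ⟪u, v⟫ :=
    div_mul_cancel_of_imp fun hv ↦ by simp_all
  rw [← Real.sqrt_sq (by positivity : 0 ≤ ‖v‖ * _), mul_pow, sq_norm_mul_sq_norm_sub_smul,
    hfoot, sub_self, zero_pow two_ne_zero, zero_add]

lemma sqrt_gramDet_div_dist_le_infDist_affineSpan (P Q R : V) :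
    √(gramDet (Q - P) (R - P)) / dist P Q ≤ infDist R (line[ℝ, P, Q] : Set V) := by
  rw [le_infDist ⟨P, left_mem_affineSpan_pair ℝ P Q⟩]
  rintro _ hy
  obtain ⟨t, rfl⟩ := mem_affineSpan_pair_iff_exists_lineMap_eq.1 hy
  refine div_le_of_le_mul₀ dist_nonneg dist_nonneg ?_
  rw [dist_comm P Q, dist_eq_norm, dist_eq_norm, AffineMap.lineMap_apply_module',
    mul_comm, show R - (t • (Q - P) + P) = (R - P) - t • (Q - P) by abel]
  exact sqrt_gramDet_le_norm_mul_norm_sub_smul _ _ t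

lemma infDist_segment_mul_dist_le_sqrt_gramDet {P Q R : V} (h₀ : 0 ≤ ⟪R - P, Q - P⟫)
    (h₁ : ⟪R - P, Q - P⟫ ≤ ‖Q - P‖ ^ 2) :
    infDist R (segment ℝ P Q) * dist P Q ≤ √(gramDet (Q - P) (R - P)) := by
  -- `lineMap P Q t` is the foot of the perpendicular from `R`
  set t := ⟪R - P, Q - P⟫ / ‖Q - P‖ ^ 2
  have ht : t ∈ Set.Icc (0 : ℝ) 1 := ⟨by positivity, div_le_one_of_le₀ h₁ (by positivity)⟩
  calc infDist R (segment ℝ P Q) * dist P Q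
      ≤ dist R (AffineMap.lineMap P Q t) * dist P Q := by
        gcongr; exact infDist_le_dist_of_mem (lineMap_mem_segment ℝ P Q ht)
    _ = ‖Q - P‖ * ‖(R - P) - t • (Q - P)‖ := by
        rw [dist_comm P Q, dist_eq_norm, dist_eq_norm, AffineMap.lineMap_apply_module',
          mul_comm, show R - (t • (Q - P) + P) = (R - P) - t • (Q - P) by abel]
    _ = √(gramDet (Q - P) (R - P)) := norm_mul_norm_sub_inner_div_smul _ _

lemma infDist_segment_mul_dist_le_sqrt_gramDet_of_longest {P Q R : V}
    (hP : dist P R ≤ dist P Q) (hQ : dist Q R ≤ dist P Q) :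
    infDist R (segment ℝ P Q) * dist P Q ≤ √(gramDet (Q - P) (R - P)) := by
  rw [dist_comm P R, dist_comm P Q, dist_eq_norm, dist_eq_norm] at hP
  rw [dist_comm Q R, dist_comm P Q, dist_eq_norm, dist_eq_norm,
    show R - Q = (R - P) - (Q - P) by abel] at hQ
  have hP2 := pow_le_pow_left₀ (norm_nonneg _) hP 2
  have hQ2 := pow_le_pow_left₀ (norm_nonneg _) hQ 2
  rw [norm_sub_sq_real] at hQ2
  refine infDist_segment_mul_dist_le_sqrt_gramDet ?_ ?_
  · nlinarith [sq_nonneg ‖R - P‖]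
  · nlinarith [real_inner_le_norm (R - P) (Q - P), norm_nonneg (R - P)]

lemma sqrt_gramDet_div_sq_le_infDist_div_dist (P Q R : V) {M : ℝ} (hM : dist P Q ≤ M) :
    √(gramDet (Q - P) (R - P)) / M ^ 2 ≤ infDist R (line[ℝ, P, Q] : Set V) / dist P Q := by
  rcases eq_or_ne P Q with rfl | hPQ
  · simp [gramDet]
  have hd := dist_pos.2 hPQ
  calc √(gramDet (Q - P) (R - P)) / M ^ 2
      ≤ √(gramDet (Q - P) (R - P)) / dist P Q ^ 2 := by gcongr
    _ = √(gramDet (Q - P) (R - P)) / dist P Q / dist P Q := by rw [div_div, sq]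
    _ ≤ infDist R (line[ℝ, P, Q] : Set V) / dist P Q := by
        gcongr; exact sqrt_gramDet_div_dist_le_infDist_affineSpan P Q R

lemma min_infDist_segment_mul_max_dist_le_sqrt_gramDet (A B C : V) :
    min (infDist A (segment ℝ B C))
        (min (infDist B (segment ℝ A C)) (infDist C (segment ℝ A B))) *
      max (dist A B) (max (dist B C) (dist A C)) ≤ √(gramDet (B - A) (C - A)) := by
  have hlongest : max (dist A B) (max (dist B C) (dist A C)) = dist A B ∨
      max (dist A B) (max (dist B C) (dist A C)) = dist B C ∨
      max (dist A B) (max (dist B C) (dist A C)) = dist A C := by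
    rcases max_choice (dist A B) (max (dist B C) (dist A C)) with h | h
    · exact .inl h
    · rw [h]; exact .inr (max_choice _ _)
  have hAB : dist A B ≤ max (dist A B) (max (dist B C) (dist A C)) := le_max_left _ _
  have hBC : dist B C ≤ max (dist A B) (max (dist B C) (dist A C)) :=
    (le_max_left _ _).trans (le_max_right _ _)
  have hAC : dist A C ≤ max (dist A B) (max (dist B C) (dist A C)) :=
    (le_max_right _ _).trans (le_max_right _ _)
  generalize max (dist A B) (max (dist B C) (dist A C)) = M at *
  set m := min (infDist A (segment ℝ B C))
    (min (infDist B (segment ℝ A C)) (infDist C (segment ℝ A B)))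
  rcases hlongest with rfl | rfl | rfl
  · calc m * dist A B ≤ infDist C (segment ℝ A B) * dist A B := by
          gcongr; exact (min_le_right _ _).trans (min_le_right _ _)
      _ ≤ _ := infDist_segment_mul_dist_le_sqrt_gramDet_of_longest hAC hBC
  · calc m * dist B C ≤ infDist A (segment ℝ B C) * dist B C := by
          gcongr; exact min_le_left _ _
      _ ≤ √(gramDet (C - B) (A - B)) := infDist_segment_mul_dist_le_sqrt_gramDet_of_longest
          (dist_comm B A ▸ hAB) (dist_comm C A ▸ hAC)
      _ = _ := by rw [gramDet_sub_rotate]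
  · calc m * dist A C ≤ infDist B (segment ℝ A C) * dist A C := by
          gcongr; exact (min_le_right _ _).trans (min_le_left _ _)
      _ ≤ √(gramDet (C - A) (B - A)) := infDist_segment_mul_dist_le_sqrt_gramDet_of_longest
          hAB (dist_comm C B ▸ hBC)
      _ = _ := by rw [gramDet_comm]

end Gram

lemma triResolution_le_sqrt_gramDet_div_sq (A B C : Pt) :
    triResolution A B C ≤
      √(gramDet (B - A) (C - A)) / max (dist A B) (max (dist B C) (dist A C)) ^ 2 := by
  have hmM := min_infDist_segment_mul_max_dist_le_sqrt_gramDet A B C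
  have hM₀ : 0 ≤ max (dist A B) (max (dist B C) (dist A C)) :=
    dist_nonneg.trans (le_max_left _ _)
  unfold triResolution
  generalize max (dist A B) (max (dist B C) (dist A C)) = M at *
  rcases hM₀.eq_or_lt with rfl | hM
  · simp
  · rw [sq, ← div_div, div_le_div_iff_of_pos_right hM, le_div_iff₀ hM]
    exact hmM

theorem height_div_side_ge_triResolution_general (A B C : Pt)
    (r : ℝ) (hr : r = triResolution A B C) :
    r ≤ Metric.infDist C (affineSpan ℝ {A, B} : Set Pt) / dist A B ∧
    r ≤ Metric.infDist A (affineSpan ℝ {B, C} : Set Pt) / dist B C ∧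
    r ≤ Metric.infDist B (affineSpan ℝ {A, C} : Set Pt) / dist A C := by
  subst hr
  have hres := triResolution_le_sqrt_gramDet_div_sq A B C
  refine ⟨hres.trans ?_, hres.trans ?_, hres.trans ?_⟩
  · exact sqrt_gramDet_div_sq_le_infDist_div_dist A B C (le_max_left _ _)
  · rw [← gramDet_sub_rotate]
    exact sqrt_gramDet_div_sq_le_infDist_div_dist B C A
      ((le_max_left _ _).trans (le_max_right _ _))
  · rw [gramDet_comm]
    exact sqrt_gramDet_div_sq_le_infDist_div_dist A C B
      ((le_max_right _ _).trans (le_max_right _ _))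

/-- For each side of a triangle, the distance from the opposite vertex to the line
through that side, divided by the length of the side, is at least the resolution of
the triangle. -/
theorem height_div_side_ge_triResolution (A B C : Pt)
    (h : ¬ Collinear ℝ ({A, B, C} : Set Pt)) (r : ℝ) (hr : r = triResolution A B C) :
    r ≤ Metric.infDist C (affineSpan ℝ {A, B} : Set Pt) / dist A B ∧
    r ≤ Metric.infDist A (affineSpan ℝ {B, C} : Set Pt) / dist B C ∧
    r ≤ Metric.infDist B (affineSpan ℝ {A, C} : Set Pt) / dist A C :=
  height_div_side_ge_triResolution_general A B C r hr
end
end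

section
/- Let A, B, C ∈ ℝ² be noncollinear, let r be the resolution of the triangle ABC, let Y be the y-extent of the triangle (the maximum minus the minimum of the y-coordinates of A, B, C) and let X be its x-extent (the maximum minus the minimum of the x-coordinates of A, B, C). Then X ≤ Y / r, i.e., r · X ≤ Y. -/
/-!
Let `m` be the least vertex-to-opposite-side distance and `M` the longest side, so `r = m / M`.
The `x`-extent is the `x`-difference of two vertices, hence `X ≤ M`. For the vertex whose
`x`-coordinate lies between the other two, the vertical line through it meets the opposite side,
at a point whose `y`-coordinate lies in the `y`-range of the triangle; hence `m ≤ Y`.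
Together, `r * X = m * (X / M) ≤ m ≤ Y`.
-/

noncomputable section

open Set Metric

lemma mem_uIcc_or_mem_uIcc_or_mem_uIcc {α : Type*} [LinearOrder α] (a b c : α) :
    a ∈ uIcc b c ∨ b ∈ uIcc a c ∨ c ∈ uIcc a b := by
  simp only [mem_uIcc]
  rcases le_total a b with h₁ | h₁ <;> rcases le_total b c with h₂ | h₂ <;>
    rcases le_total a c with h₃ | h₃ <;> tauto

lemma max_sub_min_le_of_abs_sub_le {a b c M : ℝ} (hab : |a - b| ≤ M) (hbc : |b - c| ≤ M)
    (hac : |a - c| ≤ M) : max a (max b c) - min a (min b c) ≤ M := by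
  rw [abs_le] at hab hbc hac
  rw [sub_le_iff_le_add, ← min_add_add_left, ← min_add_add_left]
  simp only [max_le_iff, le_min_iff]
  refine ⟨⟨?_, ?_, ?_⟩, ⟨?_, ?_, ?_⟩, ?_, ?_, ?_⟩ <;> linarith

lemma EuclideanSpace.image_apply_segment {ι : Type*} (i : ι) (U V : EuclideanSpace ℝ ι) :
    (fun Q : EuclideanSpace ℝ ι => Q i) '' segment ℝ U V = uIcc (U i) (V i) := by
  rw [← segment_eq_uIcc]
  exact image_segment ℝ (EuclideanSpace.projₗ i).toAffineMap U V

lemma EuclideanSpace.dist_eq_abs_sub_one_of_apply_zero_eq {P Q : EuclideanSpace ℝ (Fin 2)}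
    (h : P 0 = Q 0) : dist P Q = |P 1 - Q 1| := by
  rw [EuclideanSpace.dist_eq, Fin.sum_univ_two, h, dist_self, Real.dist_eq]
  simp [Real.sqrt_sq_eq_abs]

lemma infDist_segment_le_of_apply_zero_mem_uIcc {P U V : EuclideanSpace ℝ (Fin 2)} {lo hi : ℝ}
    (hP₀ : P 0 ∈ uIcc (U 0) (V 0)) (hP₁ : P 1 ∈ Icc lo hi) (hU₁ : U 1 ∈ Icc lo hi)
    (hV₁ : V 1 ∈ Icc lo hi) : infDist P (segment ℝ U V) ≤ hi - lo := by
  rw [← EuclideanSpace.image_apply_segment] at hP₀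
  obtain ⟨Q, hQ, hQP⟩ := hP₀
  have hQ₁ : Q 1 ∈ Icc lo hi := uIcc_subset_Icc hU₁ hV₁ <| by
    rw [← EuclideanSpace.image_apply_segment]
    exact mem_image_of_mem _ hQ
  calc infDist P (segment ℝ U V) ≤ dist P Q := infDist_le_dist_of_mem hQ
    _ = |P 1 - Q 1| := EuclideanSpace.dist_eq_abs_sub_one_of_apply_zero_eq hQP.symm
    _ ≤ hi - lo := abs_sub_le_of_le_of_le hP₁.1 hP₁.2 hQ₁.1 hQ₁.2

lemma min_infDist_segment_le_yExtent (A B C : EuclideanSpace ℝ (Fin 2)) :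
    min (infDist A (segment ℝ B C)) (min (infDist B (segment ℝ A C)) (infDist C (segment ℝ A B)))
      ≤ max (A 1) (max (B 1) (C 1)) - min (A 1) (min (B 1) (C 1)) := by
  have hA : A 1 ∈ Icc (min (A 1) (min (B 1) (C 1))) (max (A 1) (max (B 1) (C 1))) := by simp
  have hB : B 1 ∈ Icc (min (A 1) (min (B 1) (C 1))) (max (A 1) (max (B 1) (C 1))) := by simp
  have hC : C 1 ∈ Icc (min (A 1) (min (B 1) (C 1))) (max (A 1) (max (B 1) (C 1))) := by simp
  rcases mem_uIcc_or_mem_uIcc_or_mem_uIcc (A 0) (B 0) (C 0) with h | h | h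
  · exact (min_le_left _ _).trans (infDist_segment_le_of_apply_zero_mem_uIcc h hA hB hC)
  · exact (min_le_right _ _).trans <|
      (min_le_left _ _).trans (infDist_segment_le_of_apply_zero_mem_uIcc h hB hA hC)
  · exact (min_le_right _ _).trans <|
      (min_le_right _ _).trans (infDist_segment_le_of_apply_zero_mem_uIcc h hC hA hB)

lemma xExtent_le_max_dist (A B C : EuclideanSpace ℝ (Fin 2)) :
    max (A 0) (max (B 0) (C 0)) - min (A 0) (min (B 0) (C 0))
      ≤ max (dist A B) (max (dist B C) (dist A C)) := by
  refine max_sub_min_le_of_abs_sub_le ?_ ?_ ?_ <;> rw [← Real.dist_eq]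
  · exact (PiLp.dist_apply_le A B 0).trans (le_max_left _ _)
  · exact (PiLp.dist_apply_le B C 0).trans <| (le_max_left _ _).trans (le_max_right _ _)
  · exact (PiLp.dist_apply_le A C 0).trans <| (le_max_right _ _).trans (le_max_right _ _)

theorem xExtent_le_yExtent_div_triResolution_general (A B C : Pt)
    (r X Y : ℝ)
    (hr : r = triResolution A B C)
    (hY : Y = max (A 1) (max (B 1) (C 1)) - min (A 1) (min (B 1) (C 1)))
    (hX : X = max (A 0) (max (B 0) (C 0)) - min (A 0) (min (B 0) (C 0))) :
    r * X ≤ Y := by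
  have hm : 0 ≤ min (infDist A (segment ℝ B C))
      (min (infDist B (segment ℝ A C)) (infDist C (segment ℝ A B))) :=
    le_min infDist_nonneg (le_min infDist_nonneg infDist_nonneg)
  have hM : 0 ≤ max (dist A B) (max (dist B C) (dist A C)) :=
    le_max_of_le_left dist_nonneg
  subst hr hX hY
  rw [triResolution, div_mul_eq_mul_div, mul_div_assoc]
  -- `X / M ≤ 1` needs only `0 ≤ M`: if `M = 0` then `X / M = 0`
  exact (mul_le_of_le_one_right hm (div_le_one_of_le₀ (xExtent_le_max_dist A B C) hM)).trans
    (min_infDist_segment_le_yExtent A B C)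

/-- The `x`-extent of a triangle is at most its `y`-extent divided by its resolution. -/
theorem xExtent_le_yExtent_div_triResolution (A B C : Pt)
    (h : ¬ Collinear ℝ ({A, B, C} : Set Pt)) (r X Y : ℝ)
    (hr : r = triResolution A B C)
    (hY : Y = max (A 1) (max (B 1) (C 1)) - min (A 1) (min (B 1) (C 1)))
    (hX : X = max (A 0) (max (B 0) (C 0)) - min (A 0) (min (B 0) (C 0))) :
    r * X ≤ Y :=
  xExtent_le_yExtent_div_triResolution_general A B C r X Y hr hY hX
end
end

section
/- Let ι be a finite index set, let λ : ι → ℝ satisfy λ_i > 0 for all i and Σ_i λ_i = 1, let y : ι → ℝ and let c = Σ_i λ_i·y_i, and suppose c > 0. Suppose there are two distinct indices w, q ∈ ι such that y_q = 0, λ_q > 1/4, and y_i ≤ c for every index i ≠ w. Then c < (3/4)·y_w. -/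
/-!
The deviations `y i - c` from the weighted mean `c` have weighted sum zero, so the excess of
`y w` pays for the deficits of all other values; the deficit at `q` alone gives
`λ_q c ≤ λ_w (y_w - c)`. Since `λ_w ≤ 1 - λ_q < 3/4 < 3 λ_q`, this forces `y_w > (4/3) c`.
-/

open Finset

section WeightedMean

variable {ι R : Type*} [Fintype ι] [CommRing R] {lam y : ι → R} {c : R}

theorem sum_mul_sub_weighted_mean_eq_zero (hsum : ∑ i, lam i = 1)
    (hc : c = ∑ i, lam i * y i) : ∑ i, lam i * (y i - c) = 0 := by
  simp only [mul_sub, sum_sub_distrib, ← sum_mul, hsum, one_mul, hc, sub_self]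

theorem mul_sub_le_mul_sub_of_le_weighted_mean [PartialOrder R] [IsOrderedRing R]
    (hnonneg : ∀ i, 0 ≤ lam i) (hsum : ∑ i, lam i = 1) (hc : c = ∑ i, lam i * y i)
    {w q : ι} (hqw : q ≠ w) (hle : ∀ i, i ≠ w → y i ≤ c) :
    lam q * (c - y q) ≤ lam w * (y w - c) := by
  classical
  have hbalance := sum_mul_sub_weighted_mean_eq_zero hsum hc
  rw [← add_sum_erase _ _ (mem_univ w)] at hbalance
  have hexcess : lam w * (y w - c) = ∑ i ∈ univ.erase w, lam i * (c - y i) := by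
    simp only [mul_sub, sum_sub_distrib] at hbalance ⊢
    linear_combination hbalance
  rw [hexcess]
  refine single_le_sum (f := fun i => lam i * (c - y i)) (fun i hi => ?_) (mem_erase.2 ⟨hqw, mem_univ q⟩)
  exact mul_nonneg (hnonneg i) (sub_nonneg.2 (hle i (ne_of_mem_erase hi)))

end WeightedMean

/-- If a positive convex combination `c` has a zero value of coefficient exceeding `1/4`
and all values other than `y w` are at most `c`, then `c < (3/4)·y w`. -/
theorem convex_combination_apex_bound
    {ι : Type*} [Fintype ι] (lam : ι → ℝ) (hpos : ∀ i, 0 < lam i)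
    (hsum : ∑ i, lam i = 1) (y : ι → ℝ) (c : ℝ) (hc : c = ∑ i, lam i * y i)
    (hcpos : 0 < c) (w q : ι) (hwq : w ≠ q)
    (hyq : y q = 0) (hlamq : 1 / 4 < lam q)
    (hle : ∀ i, i ≠ w → y i ≤ c) :
    c < 3 / 4 * y w := by
  have hnonneg : ∀ i, 0 ≤ lam i := fun i => (hpos i).le
  have hdeficit : lam q * c ≤ lam w * (y w - c) := by
    simpa [hyq] using mul_sub_le_mul_sub_of_le_weighted_mean hnonneg hsum hc hwq.symm hle
  have hweights : lam w + lam q ≤ 1 :=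
    hsum ▸ add_le_sum (fun i _ => hnonneg i) (mem_univ w) (mem_univ q) hwq
  have hlamw : lam w < 3 * lam q := by linarith
  nlinarith [hpos w, mul_lt_mul_of_pos_right hlamw hcpos]
end

section
/- Let m ≥ 1, let 0 < λ ≤ 1/4 and let x : ℕ → ℝ be a sequence such that x_{i+1} < x_i for every i with 0 ≤ i ≤ m − 1, and x_i = λ·(x_{i−1} + x_{i+1}) for every i with 1 ≤ i ≤ m − 1. Then x_i ≤ (λ/(1−λ))^i · x_0 for every i with 0 ≤ i ≤ m − 1; in particular x_{m−1} ≤ (λ/(1−λ))^{m−1} · x_0. -/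
/-! Rewriting `x i = λ (x (i-1) + x (i+1))` with `x (i+1) < x i` gives `(1 - λ) x i < λ x (i-1)`,
so each step shrinks `x` by the factor `λ / (1 - λ)`; iterating gives the geometric bound. -/

theorem le_div_one_sub_mul_of_eq_mul_add {K : Type*} [Field K] [LinearOrder K]
    [IsStrictOrderedRing K] {lam a b c : K} (h0 : 0 ≤ lam) (h1 : lam < 1) (hcb : c ≤ b)
    (hb : b = lam * (a + c)) : b ≤ lam / (1 - lam) * a := by
  rw [div_mul_eq_mul_div, le_div_iff₀ (sub_pos.mpr h1)]
  nlinarith [mul_le_mul_of_nonneg_left hcb h0]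

theorem geometric_decay_of_recurrence_general
    (m : ℕ) (lam : ℝ) (hlam : 0 < lam) (hlam4 : lam ≤ 1 / 4)
    (x : ℕ → ℝ) (hdec : ∀ i, i ≤ m - 1 → x (i + 1) < x i)
    (hrec : ∀ i, 1 ≤ i → i ≤ m - 1 → x i = lam * (x (i - 1) + x (i + 1))) :
    (∀ i, i ≤ m - 1 → x i ≤ (lam / (1 - lam)) ^ i * x 0) ∧
    x (m - 1) ≤ (lam / (1 - lam)) ^ (m - 1) * x 0 := by
  have hlam1 : lam < 1 := by linarith
  have step : ∀ k < m - 1, x (k + 1) ≤ lam / (1 - lam) * x k := fun k hk =>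
    le_div_one_sub_mul_of_eq_mul_add hlam.le hlam1 (hdec (k + 1) hk).le
      (by simpa using hrec (k + 1) le_add_self hk)
  have bound : ∀ i ≤ m - 1, x i ≤ (lam / (1 - lam)) ^ i * x 0 := fun i hi =>
    le_geom (div_pos hlam (sub_pos.mpr hlam1)).le i fun k hk => step k (by omega)
  exact ⟨bound, bound _ le_rfl⟩

/-- A strictly decreasing sequence satisfying the recurrence `x i = λ·(x (i-1) + x (i+1))`
decreases at least geometrically with ratio `λ/(1-λ)`. -/
theorem geometric_decay_of_recurrence
    (m : ℕ) (hm : 1 ≤ m) (lam : ℝ) (hlam : 0 < lam) (hlam4 : lam ≤ 1 / 4)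
    (x : ℕ → ℝ) (hdec : ∀ i, i ≤ m - 1 → x (i + 1) < x i)
    (hrec : ∀ i, 1 ≤ i → i ≤ m - 1 → x i = lam * (x (i - 1) + x (i + 1))) :
    (∀ i, i ≤ m - 1 → x i ≤ (lam / (1 - lam)) ^ i * x 0) ∧
    x (m - 1) ≤ (lam / (1 - lam)) ^ (m - 1) * x 0 :=
  geometric_decay_of_recurrence_general m lam hlam hlam4 x hdec hrec
end

section
/- Let G be a simple graph on a finite vertex set V and let p : V → ℝ² be a planar straight-line drawing of G such that the distance between any two separated geometric objects of the drawing is at least d, where d > 0. Let p' : V → ℝ² be any map such that for every vertex v, both coordinates of p'(v) differ from the corresponding coordinates of p(v) by at most d/3. Then p' is also a planar straight-line drawing of G. -/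
noncomputable section

/-- `p` is a planar straight-line drawing of `G`: it is injective, segments of edges
sharing no endpoint are disjoint, and no vertex point lies on the segment of a
non-incident edge. -/
def IsPlanarDrawing {V : Type*} (G : SimpleGraph V) (p : V → Pt) : Prop :=
  Function.Injective p ∧
  (∀ u₁ w₁ u₂ w₂ : V, G.Adj u₁ w₁ → G.Adj u₂ w₂ → u₁ ≠ u₂ → u₁ ≠ w₂ → w₁ ≠ u₂ → w₁ ≠ w₂ →
     Disjoint (segment ℝ (p u₁) (p w₁)) (segment ℝ (p u₂) (p w₂))) ∧
  (∀ v u w : V, G.Adj u w → v ≠ u → v ≠ w → p v ∉ segment ℝ (p u) (p w))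

/-- The pairs of separated geometric objects of the drawing `p` of `G`:
two distinct vertices, a vertex and a non-incident edge, or two edges sharing no
endpoint. -/
def sepPairs {V : Type*} (G : SimpleGraph V) (p : V → Pt) : Set (Set Pt × Set Pt) :=
  {op | (∃ u v : V, u ≠ v ∧ op = ({p u}, {p v}))
      ∨ (∃ v u w : V, G.Adj u w ∧ v ≠ u ∧ v ≠ w ∧ op = ({p v}, segment ℝ (p u) (p w)))
      ∨ (∃ u₁ w₁ u₂ w₂ : V, G.Adj u₁ w₁ ∧ G.Adj u₂ w₂ ∧ u₁ ≠ u₂ ∧ u₁ ≠ w₂ ∧ w₁ ≠ u₂ ∧ w₁ ≠ w₂ ∧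
          op = (segment ℝ (p u₁) (p w₁), segment ℝ (p u₂) (p w₂)))}

/-- The distance between two geometric objects: the infimum of the distances between
their points. -/
noncomputable def objDist (s t : Set Pt) : ℝ := sInf (Set.image2 dist s t)

/-- The resolution of a drawing: the ratio of the minimum to the maximum of the
distances over all pairs of separated geometric objects. -/
noncomputable def drawingResolution {V : Type*} (G : SimpleGraph V) (p : V → Pt) : ℝ :=
  sInf ((fun op => objDist op.1 op.2) '' sepPairs G p) /
  sSup ((fun op => objDist op.1 op.2) '' sepPairs G p)

/-! Moving each coordinate by at most `d / 3` moves each vertex by at most `c = √2 · d / 3`,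
hence every point of a perturbed edge lies within `c` of the original edge. Two objects that
met after the perturbation would therefore give points of separated original objects at
distance at most `2c < d`. -/

lemma objDist_le_dist {s t : Set Pt} {x y : Pt} (hx : x ∈ s) (hy : y ∈ t) :
    objDist s t ≤ dist x y :=
  csInf_le ⟨0, Set.forall_mem_image2.2 fun _ _ _ _ => dist_nonneg⟩ (Set.mem_image2_of_mem hx hy)

lemma disjoint_of_forall_near_of_lt_objDist {s t s' t' : Set Pt} {c : ℝ}
    (hs : ∀ x ∈ s', ∃ y ∈ s, dist x y ≤ c) (ht : ∀ x ∈ t', ∃ y ∈ t, dist x y ≤ c)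
    (hc : 2 * c < objDist s t) : Disjoint s' t' := by
  refine Set.disjoint_left.2 fun x hxs hxt => ?_
  obtain ⟨y, hy, hxy⟩ := hs x hxs
  obtain ⟨z, hz, hxz⟩ := ht x hxt
  have := calc objDist s t ≤ dist y z := objDist_le_dist hy hz
    _ ≤ dist x y + dist x z := dist_triangle_left y z x
  linarith

lemma dist_le_sqrt_card_mul_of_abs_sub_le {ι : Type*} [Fintype ι] {x y : EuclideanSpace ℝ ι}
    {r : ℝ} (hr : 0 ≤ r) (h : ∀ i, |x i - y i| ≤ r) : dist x y ≤ √(Fintype.card ι) * r := by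
  rw [EuclideanSpace.dist_eq, ← Real.sqrt_sq hr, ← Real.sqrt_mul (Nat.cast_nonneg _)]
  refine Real.sqrt_le_sqrt ?_
  calc ∑ i, dist (x i) (y i) ^ 2 ≤ ∑ _i : ι, r ^ 2 := Finset.sum_le_sum fun i _ => by
        rw [Real.dist_eq]; exact pow_le_pow_left₀ (abs_nonneg _) (h i) 2
    _ = Fintype.card ι * r ^ 2 := by simp

lemma exists_mem_segment_dist_le {E : Type*} [SeminormedAddCommGroup E] [NormedSpace ℝ E]
    {a b a' b' x : E} {c : ℝ} (ha : dist a' a ≤ c) (hb : dist b' b ≤ c)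
    (hx : x ∈ segment ℝ a' b') : ∃ y ∈ segment ℝ a b, dist x y ≤ c := by
  obtain ⟨s, t, hs, ht, hst, rfl⟩ := hx
  refine ⟨s • a + t • b, ⟨s, t, hs, ht, hst, rfl⟩, ?_⟩
  calc dist (s • a' + t • b') (s • a + t • b) ≤ dist (s • a') (s • a) + dist (t • b') (t • b) :=
        dist_add_add_le _ _ _ _
    _ = s * dist a' a + t * dist b' b := by
        rw [dist_smul₀, dist_smul₀, Real.norm_of_nonneg hs, Real.norm_of_nonneg ht]
    _ ≤ s * c + t * c := by gcongr
    _ = c := by rw [← add_mul, hst, one_mul]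

theorem perturbation_keeps_planar_general
    {V : Type*} (G : SimpleGraph V) (p : V → Pt)
    (d : ℝ) (hd : 0 < d)
    (hsep : ∀ op ∈ sepPairs G p, d ≤ objDist op.1 op.2)
    (p' : V → Pt) (hpert : ∀ v : V, ∀ i : Fin 2, |p' v i - p v i| ≤ d / 3) :
    IsPlanarDrawing G p' := by
  set c := √2 * (d / 3)
  have hc : 2 * c < d := by
    have : √2 < 3 / 2 := (Real.sqrt_lt' (by norm_num)).2 (by norm_num)
    show 2 * (√2 * (d / 3)) < d
    nlinarith
  have hmove (v : V) : dist (p' v) (p v) ≤ c := by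
    simpa using dist_le_sqrt_card_mul_of_abs_sub_le (by positivity) (hpert v)
  have hvertex (v : V) : ∀ x ∈ ({p' v} : Set Pt), ∃ y ∈ ({p v} : Set Pt), dist x y ≤ c := by
    rintro x rfl; exact ⟨p v, rfl, hmove v⟩
  have hedge (u w : V) : ∀ x ∈ segment ℝ (p' u) (p' w), ∃ y ∈ segment ℝ (p u) (p w),
      dist x y ≤ c := fun _ => exists_mem_segment_dist_le (hmove u) (hmove w)
  have hsep' : ∀ op ∈ sepPairs G p, 2 * c < objDist op.1 op.2 := fun op hop =>
    hc.trans_le (hsep op hop)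
  refine ⟨fun u v huv => ?_, fun u₁ w₁ u₂ w₂ h₁ h₂ n₁ n₂ n₃ n₄ => ?_, fun v u w h n₁ n₂ => ?_⟩
  · by_contra hne
    have := disjoint_of_forall_near_of_lt_objDist (hvertex u) (hvertex v)
      (hsep' _ (Or.inl ⟨u, v, hne, rfl⟩))
    simp [huv] at this
  · exact disjoint_of_forall_near_of_lt_objDist (hedge u₁ w₁) (hedge u₂ w₂)
      (hsep' _ (Or.inr (Or.inr ⟨u₁, w₁, u₂, w₂, h₁, h₂, n₁, n₂, n₃, n₄, rfl⟩)))
  · exact Set.disjoint_singleton_left.1 <| disjoint_of_forall_near_of_lt_objDist (hvertex v)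
      (hedge u w) (hsep' _ (Or.inr (Or.inl ⟨v, u, w, h, n₁, n₂, rfl⟩)))

/-- Perturbing each coordinate of each vertex of a planar straight-line drawing by at
most a third of the minimum distance between separated objects keeps the drawing
planar. -/
theorem perturbation_keeps_planar
    {V : Type*} (G : SimpleGraph V) (p : V → Pt) (hplanar : IsPlanarDrawing G p)
    (d : ℝ) (hd : 0 < d)
    (hsep : ∀ op ∈ sepPairs G p, d ≤ objDist op.1 op.2)
    (p' : V → Pt) (hpert : ∀ v : V, ∀ i : Fin 2, |p' v i - p v i| ≤ d / 3) :
    IsPlanarDrawing G p' :=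
  perturbation_keeps_planar_general G p d hd hsep p' hpert
end
end

section
/- Let m ≥ 1, let a ≤ b be real numbers, and let f : ℝ → ℝ^m be a curve such that for each coordinate index l ∈ {1, …, m}, the real function t ↦ f(t)_l is monotone (either nondecreasing or nonincreasing) on the interval [a, b]. Then the total variation of f on [a, b] (with respect to the Euclidean norm on ℝ^m) is at most Σ_{l=1}^{m} |f(b)_l − f(a)_l|. -/
/-!
The Euclidean distance is at most the sum of the coordinate distances, so the variation of `f`
is at most the sum of the variations of its coordinates. A real function `g` that is monotone
or antitone on `[a, b]` has variation exactly `|g b - g a|` there, since its increments along any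
subdivision all have the same sign and telescope.
-/

open scoped ENNReal
open Set

namespace PiLp

variable {ι : Type*} [Fintype ι] {p : ℝ≥0∞} [Fact (1 ≤ p)] {β : ι → Type*}
  [∀ i, SeminormedAddCommGroup (β i)]

theorem norm_le_sum_norm (x : PiLp p β) : ‖x‖ ≤ ∑ i, ‖x i‖ := by
  classical
  calc ‖x‖ = ‖∑ i, PiLp.single p i (x i)‖ := by
        congr 1; ext j; simp
    _ ≤ ∑ i, ‖PiLp.single p i (x i)‖ := norm_sum_le _ _
    _ = ∑ i, ‖x i‖ := by simp only [PiLp.norm_single]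

theorem edist_le_sum_edist (x y : PiLp p β) : edist x y ≤ ∑ i, edist (x i) (y i) := by
  simp only [edist_dist, dist_eq_norm]
  rw [← ENNReal.ofReal_sum_of_nonneg fun i _ => norm_nonneg _]
  exact ENNReal.ofReal_le_ofReal (by simpa using norm_le_sum_norm (x - y))

end PiLp

section Variation

variable {α : Type*} [LinearOrder α]

theorem eVariationOn_le_sum_of_edist_le_sum {E F ι : Type*} [PseudoEMetricSpace E]
    [PseudoEMetricSpace F] {f : α → E} {g : ι → α → F} {s : Set α} {t : Finset ι}
    (h : ∀ x ∈ s, ∀ y ∈ s, edist (f x) (f y) ≤ ∑ i ∈ t, edist (g i x) (g i y)) :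
    eVariationOn f s ≤ ∑ i ∈ t, eVariationOn (g i) s := by
  refine iSup_le fun ⟨n, u, hu, us⟩ => ?_
  calc ∑ j ∈ Finset.range n, edist (f (u (j + 1))) (f (u j))
      ≤ ∑ j ∈ Finset.range n, ∑ i ∈ t, edist (g i (u (j + 1))) (g i (u j)) :=
        Finset.sum_le_sum fun j _ => h _ (us _) _ (us _)
    _ = ∑ i ∈ t, ∑ j ∈ Finset.range n, edist (g i (u (j + 1))) (g i (u j)) :=
        Finset.sum_comm
    _ ≤ ∑ i ∈ t, eVariationOn (g i) s :=
        Finset.sum_le_sum fun i _ => eVariationOn.sum_le hu us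

theorem eVariationOn_neg {E : Type*} [SeminormedAddCommGroup E] (f : α → E) (s : Set α) :
    eVariationOn (-f) s = eVariationOn f s := by
  simp [eVariationOn, edist_neg_neg]

end Variation

theorem eVariationOn_Icc_eq_of_monotoneOn_or_antitoneOn {g : ℝ → ℝ} {a b : ℝ}
    (hab : a ≤ b) (hg : MonotoneOn g (Icc a b) ∨ AntitoneOn g (Icc a b)) :
    eVariationOn g (Icc a b) = .ofReal |g b - g a| := by
  have ha : a ∈ Icc a b := left_mem_Icc.2 hab
  have hb : b ∈ Icc a b := right_mem_Icc.2 hab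
  rcases hg with hg | hg
  · rw [← inter_self (Icc a b), hg.eVariationOn_eq ha hb,
      abs_of_nonneg (sub_nonneg.2 (hg ha hb hab))]
  · calc eVariationOn g (Icc a b)
        = eVariationOn (fun t => -g t) (Icc a b ∩ Icc a b) := by
          rw [inter_self]; exact (eVariationOn_neg g _).symm
      _ = .ofReal (-g b - -g a) := hg.neg.eVariationOn_eq ha hb
      _ = .ofReal |g b - g a| := by
          rw [abs_of_nonpos (sub_nonpos.2 (hg ha hb hab)), neg_sub, sub_neg_eq_add,
            neg_add_eq_sub]

theorem eVariationOn_le_sum_of_coordinatewise_monotone_general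
    (m : ℕ) (a b : ℝ) (hab : a ≤ b)
    (f : ℝ → EuclideanSpace ℝ (Fin m))
    (hmono : ∀ l : Fin m, MonotoneOn (fun t => f t l) (Set.Icc a b) ∨
      AntitoneOn (fun t => f t l) (Set.Icc a b)) :
    eVariationOn f (Set.Icc a b) ≤ ENNReal.ofReal (∑ l : Fin m, |f b l - f a l|) := by
  calc eVariationOn f (Icc a b) ≤ ∑ l, eVariationOn (fun t => f t l) (Icc a b) :=
        eVariationOn_le_sum_of_edist_le_sum fun x _ y _ => PiLp.edist_le_sum_edist (f x) (f y)
    _ = ∑ l, ENNReal.ofReal |f b l - f a l| :=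
        Finset.sum_congr rfl fun l _ =>
          eVariationOn_Icc_eq_of_monotoneOn_or_antitoneOn hab (hmono l)
    _ = ENNReal.ofReal (∑ l, |f b l - f a l|) :=
        (ENNReal.ofReal_sum_of_nonneg fun l _ => abs_nonneg _).symm

/-- The total variation on `[a, b]` of a curve in `ℝ^m` that is coordinatewise monotone
is at most the sum of the coordinate extents. -/
theorem eVariationOn_le_sum_of_coordinatewise_monotone
    (m : ℕ) (hm : 1 ≤ m) (a b : ℝ) (hab : a ≤ b)
    (f : ℝ → EuclideanSpace ℝ (Fin m))
    (hmono : ∀ l : Fin m, MonotoneOn (fun t => f t l) (Set.Icc a b) ∨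
      AntitoneOn (fun t => f t l) (Set.Icc a b)) :
    eVariationOn f (Set.Icc a b) ≤ ENNReal.ofReal (∑ l : Fin m, |f b l - f a l|) :=
  eVariationOn_le_sum_of_coordinatewise_monotone_general m a b hab f hmono
end

section
/- Let a, b, c ∈ ℝ² be three points all of whose coordinates are integers, and suppose a, b, c are not collinear. Then the Euclidean distance from c to the line through a and b is at least 1 / dist(a, b). -/
/-!
For the standard orientation of `ℝ²`, the area form `ω (b - a) (c - a)` is the determinant of the
coordinate differences, so it is an integer, and it is nonzero because `a, b, c` are not collinear;
hence `1 ≤ |ω (b - a) (c - a)|`. Moving `a` to any point `p` of the line `ab` does not change this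
determinant, and `|ω u v| ≤ ‖u‖ * ‖v‖`, so `1 ≤ dist a b * dist c p`.
-/

open Module Metric EuclideanSpace

theorem linearIndependent_vsub_of_not_collinear {k V P : Type*} [DivisionRing k]
    [AddCommGroup V] [Module k V] [AddTorsor V P] {a b c : P}
    (h : ¬ Collinear k ({a, b, c} : Set P)) : LinearIndependent k ![b -ᵥ a, c -ᵥ a] := by
  rw [← affineIndependent_iff_not_collinear_set,
    affineIndependent_iff_linearIndependent_vsub k _ (0 : Fin 3),
    ← linearIndependent_equiv (finSuccAboveEquiv (0 : Fin 3))] at h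
  convert! h using 1
  ext i
  fin_cases i <;> rfl

namespace Orientation

variable {E : Type*} [NormedAddCommGroup E] [InnerProductSpace ℝ E] [Fact (finrank ℝ E = 2)]
  (o : Orientation ℝ E (Fin 2))

theorem areaForm_ne_zero_of_linearIndependent {x y : E} (h : LinearIndependent ℝ ![x, y]) :
    o.areaForm x y ≠ 0 := by
  let B := o.finOrthonormalBasis two_pos Fact.out
  have hspan := h.span_eq_top_of_card_eq_finrank (by simp [Fact.out (p := finrank ℝ E = 2)])
  rw [areaForm_to_volumeForm, o.volumeForm_robust B (o.finOrthonormalBasis_orientation _ _)]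
  exact ((B.toBasis.is_basis_iff_det).1 ⟨h, hspan⟩).ne_zero

theorem areaForm_sub_eq_of_mem_affineSpan_pair {a b c p : E} (hp : p ∈ line[ℝ, a, b]) :
    o.areaForm (b - a) (c - p) = o.areaForm (b - a) (c - a) := by
  obtain ⟨r, rfl⟩ := mem_affineSpan_pair_iff_exists_lineMap_eq.1 hp
  have : c - AffineMap.lineMap a b r = (c - a) - r • (b - a) := by
    rw [AffineMap.lineMap_apply, vsub_eq_sub, vadd_eq_add]; abel
  rw [this, map_sub, map_smul, areaForm_apply_self, smul_zero, sub_zero]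

theorem abs_areaForm_div_dist_le_infDist (a b c : E) :
    |o.areaForm (b - a) (c - a)| / dist a b ≤ infDist c (line[ℝ, a, b] : Set E) := by
  refine (le_infDist ⟨a, left_mem_affineSpan_pair ℝ a b⟩).2 fun p hp => ?_
  refine div_le_of_le_mul₀ dist_nonneg dist_nonneg ?_
  calc |o.areaForm (b - a) (c - a)| = |o.areaForm (b - a) (c - p)| := by
        rw [o.areaForm_sub_eq_of_mem_affineSpan_pair hp]
    _ ≤ ‖b - a‖ * ‖c - p‖ := o.abs_areaForm_le _ _
    _ = dist c p * dist a b := by rw [← dist_eq_norm, ← dist_eq_norm, dist_comm b, mul_comm]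

end Orientation

theorem EuclideanSpace.areaForm_basisFun (x y : EuclideanSpace ℝ (Fin 2)) :
    (basisFun (Fin 2) ℝ).toBasis.orientation.areaForm x y = x 0 * y 1 - x 1 * y 0 := by
  rw [Orientation.areaForm_to_volumeForm,
    Orientation.volumeForm_robust _ (basisFun (Fin 2) ℝ) rfl,
    Basis.det_apply, Matrix.det_fin_two]
  simp only [Basis.toMatrix_apply, OrthonormalBasis.coe_toBasis_repr_apply, basisFun_repr,
    Matrix.cons_val_zero, Matrix.cons_val_one, Matrix.cons_val_fin_one]
  ring

theorem EuclideanSpace.exists_int_sub_apply {ι : Type*} {x y : EuclideanSpace ℝ ι}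
    (hx : ∀ i, ∃ z : ℤ, x i = z) (hy : ∀ i, ∃ z : ℤ, y i = z) (i : ι) :
    ∃ z : ℤ, (x - y) i = z := by
  obtain ⟨m, hm⟩ := hx i
  obtain ⟨n, hn⟩ := hy i
  exact ⟨m - n, by simp [hm, hn]⟩

theorem EuclideanSpace.exists_int_areaForm_basisFun {x y : EuclideanSpace ℝ (Fin 2)}
    (hx : ∀ i, ∃ z : ℤ, x i = z) (hy : ∀ i, ∃ z : ℤ, y i = z) :
    ∃ z : ℤ, (basisFun (Fin 2) ℝ).toBasis.orientation.areaForm x y = z := by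
  choose m hm using hx
  choose n hn using hy
  exact ⟨m 0 * n 1 - m 1 * n 0, by simp [areaForm_basisFun, hm, hn]⟩

theorem one_le_abs_of_eq_intCast_of_ne_zero {x : ℝ} {z : ℤ} (hz : x = z) (hx : x ≠ 0) :
    1 ≤ |x| := by
  rw [hz, ← Int.cast_abs]
  exact_mod_cast Int.one_le_abs (by rintro rfl; simp_all)

/-- For a nondegenerate lattice triangle in the plane, the distance from a vertex to
the line through the other two is at least the reciprocal of their distance. -/
theorem lattice_triangle_height_lower_bound
    (a b c : EuclideanSpace ℝ (Fin 2))
    (ha : ∀ i : Fin 2, ∃ z : ℤ, a i = z)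
    (hb : ∀ i : Fin 2, ∃ z : ℤ, b i = z)
    (hc : ∀ i : Fin 2, ∃ z : ℤ, c i = z)
    (h : ¬ Collinear ℝ ({a, b, c} : Set (EuclideanSpace ℝ (Fin 2)))) :
    1 / dist a b ≤ Metric.infDist c (affineSpan ℝ {a, b} : Set (EuclideanSpace ℝ (Fin 2))) := by
  set o := (basisFun (Fin 2) ℝ).toBasis.orientation
  have hne : o.areaForm (b - a) (c - a) ≠ 0 :=
    o.areaForm_ne_zero_of_linearIndependent <| by
      simpa only [vsub_eq_sub] using linearIndependent_vsub_of_not_collinear h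
  obtain ⟨z, hz⟩ := exists_int_areaForm_basisFun
    (exists_int_sub_apply hb ha) (exists_int_sub_apply hc ha)
  calc 1 / dist a b ≤ |o.areaForm (b - a) (c - a)| / dist a b :=
        div_le_div_of_nonneg_right (one_le_abs_of_eq_intCast_of_ne_zero hz hne) dist_nonneg
    _ ≤ infDist c (line[ℝ, a, b] : Set _) := o.abs_areaForm_div_dist_le_infDist a b c
end
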